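/- arXiv:2509.12493 — 2 statements merged into one kernel-verified Lean document; each statement's English description precedes it below -/
import Mathlib

section
/- For L > 0, define f : [0, 2·arctan(1/sinh L)] → ℝ piecewise by f(a) = 2·arctan(e^L·tan(a/2)) for 0 ≤ a ≤ arctan(1/sinh L), and f(a) = arccos(−sin(a)·sinh(L) + cos(a)) for arctan(1/sinh L) ≤ a ≤ 2·arctan(1/sinh L). Then f is continuous, strictly monotonically increasing, maps [0, arctan(1/sinh L)] onto [0, π/2], and maps [arctan(1/sinh L), 2·arctan(1/sinh L)] onto [π/2, π]. -/
/-!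
With `t = arctan (1 / sinh L)` one has `2 * arctan (exp (-L)) = t`, so `tan (t / 2) = exp (-L)` and
the first branch reaches `π / 2` exactly at `t`. Since `sin t = 1 / cosh L` and `cos t = tanh L`,
the addition formula turns the second branch into `π / 2 + arcsin (cosh L * sin (a - t))`.
Both branches are then continuous and strictly increasing and agree at `t`, and a continuous
increasing function maps an interval onto the interval between its endpoint values.
-/

open Real Set

section Gluing

variable {α β : Type*} [ConditionallyCompleteLinearOrder α] [TopologicalSpace α] [OrderTopology α]
  [DenselyOrdered α] [LinearOrder β] [TopologicalSpace β] [OrderClosedTopology β]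
  {g₁ g₂ : α → β} {a b c : α}

theorem continuousOn_strictMonoOn_image_Icc_ite_le (hab : a ≤ b) (hbc : b ≤ c)
    (hb : g₁ b = g₂ b) (hc₁ : ContinuousOn g₁ (Icc a b)) (hc₂ : ContinuousOn g₂ (Icc b c))
    (hm₁ : StrictMonoOn g₁ (Icc a b)) (hm₂ : StrictMonoOn g₂ (Icc b c)) :
    ContinuousOn (fun x => if x ≤ b then g₁ x else g₂ x) (Icc a c) ∧
      StrictMonoOn (fun x => if x ≤ b then g₁ x else g₂ x) (Icc a c) ∧
      (fun x => if x ≤ b then g₁ x else g₂ x) '' Icc a b = Icc (g₁ a) (g₁ b) ∧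
      (fun x => if x ≤ b then g₁ x else g₂ x) '' Icc b c = Icc (g₂ b) (g₂ c) := by
  set f := fun x => if x ≤ b then g₁ x else g₂ x
  have h₁ : EqOn f g₁ (Icc a b) := fun x hx => if_pos hx.2
  have h₂ : EqOn f g₂ (Icc b c) := fun x hx => by
    rcases hx.1.eq_or_lt with rfl | hbx
    · exact (if_pos le_rfl).trans hb
    · exact if_neg hbx.not_ge
  rw [← Icc_union_Icc_eq_Icc hab hbc, h₁.image_eq, h₂.image_eq,
    hc₁.image_Icc_of_monotoneOn hab hm₁.monotoneOn, hc₂.image_Icc_of_monotoneOn hbc hm₂.monotoneOn]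
  exact ⟨(hc₁.congr h₁).union_of_isClosed (hc₂.congr h₂) isClosed_Icc isClosed_Icc,
    (hm₁.congr h₁.symm).union (hm₂.congr h₂.symm) (isGreatest_Icc hab) (isLeast_Icc hbc), rfl, rfl⟩

end Gluing

theorem strictMonoOn_two_mul_arctan_mul_tan_half {k : ℝ} (hk : 0 < k) :
    StrictMonoOn (fun a => 2 * arctan (k * tan (a / 2))) (Ioo (-π) π) := fun x hx y hy hxy => by
  have half_mem : ∀ z ∈ Ioo (-π) π, z / 2 ∈ Ioo (-(π / 2)) (π / 2) := fun z hz =>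
    ⟨by linarith [hz.1], by linarith [hz.2]⟩
  have := strictMonoOn_tan (half_mem x hx) (half_mem y hy) (by linarith)
  simpa using arctan_strictMono (mul_lt_mul_of_pos_left this hk)

theorem continuousOn_two_mul_arctan_mul_tan_half (k : ℝ) :
    ContinuousOn (fun a => 2 * arctan (k * tan (a / 2))) (Ioo (-π) π) := by
  refine continuousOn_const.mul (continuous_arctan.comp_continuousOn
    (continuousOn_const.mul (continuousOn_tan_Ioo.comp (continuousOn_id.div_const 2) ?_)))
  exact fun z hz => ⟨by linarith [hz.1], by linarith [hz.2]⟩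

theorem strictMonoOn_arcsin_mul_sin_sub {k s c : ℝ} (hk : 0 < k) (hs : s ≤ π / 2)
    (hks : k * sin s ≤ 1) :
    StrictMonoOn (fun x => arcsin (k * sin (x - c))) (Icc (c - s) (c + s)) := by
  have shift_mem : ∀ z ∈ Icc (c - s) (c + s), z - c ∈ Icc (-(π / 2)) (π / 2) := fun z hz =>
    ⟨by linarith [hz.1], by linarith [hz.2]⟩
  have bound : ∀ z ∈ Icc (c - s) (c + s), k * sin (z - c) ∈ Icc (-1) 1 := fun z hz => by
    have hlo : sin (-s) ≤ sin (z - c) :=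
      sin_le_sin_of_le_of_le_pi_div_two (by linarith) (by linarith [hz.2]) (by linarith [hz.1])
    have hhi : sin (z - c) ≤ sin s :=
      sin_le_sin_of_le_of_le_pi_div_two (by linarith [hz.1]) hs (by linarith [hz.2])
    rw [sin_neg] at hlo
    constructor <;> nlinarith
  intro x hx y hy hxy
  exact strictMonoOn_arcsin (bound x hx) (bound y hy)
    (mul_lt_mul_of_pos_left (strictMonoOn_sin (shift_mem x hx) (shift_mem y hy) (by linarith)) hk)

theorem arccos_neg_eq_pi_div_two_add_arcsin (x : ℝ) : arccos (-x) = π / 2 + arcsin x := by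
  rw [arccos_eq_pi_div_two_sub_arcsin, arcsin_neg, sub_neg_eq_add]

section InverseSinh

variable {L : ℝ}

theorem two_mul_arctan_exp_neg (hL : 0 < L) : 2 * arctan (exp (-L)) = arctan (1 / sinh L) := by
  have hu : exp (-L) < 1 := exp_lt_one_iff.2 (by linarith)
  have hu' : 0 < exp (-L) := exp_pos _
  have hu2 : 1 - exp (-L) ^ 2 ≠ 0 := by nlinarith
  rw [two_mul_arctan (by linarith) hu, sinh_eq, ← inv_inv (exp L), ← exp_neg]
  congr 1
  field_simp

theorem sqrt_one_add_inv_sinh_sq (hL : 0 < L) : √(1 + (1 / sinh L) ^ 2) = cosh L / sinh L := by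
  have hs : 0 < sinh L := sinh_pos_iff.2 hL
  rw [← sqrt_sq (by positivity : 0 ≤ cosh L / sinh L)]
  congr 1
  field_simp
  rw [cosh_sq]

theorem sin_arctan_inv_sinh (hL : 0 < L) : sin (arctan (1 / sinh L)) = 1 / cosh L := by
  have hs : 0 < sinh L := sinh_pos_iff.2 hL
  rw [sin_arctan, sqrt_one_add_inv_sinh_sq hL]
  field_simp

theorem cos_arctan_inv_sinh (hL : 0 < L) : cos (arctan (1 / sinh L)) = sinh L / cosh L := by
  rw [cos_arctan, sqrt_one_add_inv_sinh_sq hL, one_div_div]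

theorem arccos_neg_sin_mul_sinh_add_cos (hL : 0 < L) (a : ℝ) :
    arccos (-sin a * sinh L + cos a) = π / 2 + arcsin (cosh L * sin (a - arctan (1 / sinh L))) := by
  rw [← arccos_neg_eq_pi_div_two_add_arcsin, sin_sub, sin_arctan_inv_sinh hL,
    cos_arctan_inv_sinh hL]
  congr 1
  field_simp [(cosh_pos L).ne']
  ring

end InverseSinh

theorem piecewise_angle_function_properties (L : ℝ) (hL : 0 < L)
    (f : ℝ → ℝ)
    (hf : f = fun a =>
      if a ≤ Real.arctan (1 / Real.sinh L) then
        2 * Real.arctan (Real.exp L * Real.tan (a / 2))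
      else
        Real.arccos (-Real.sin a * Real.sinh L + Real.cos a)) :
    ContinuousOn f (Icc 0 (2 * Real.arctan (1 / Real.sinh L))) ∧
    StrictMonoOn f (Icc 0 (2 * Real.arctan (1 / Real.sinh L))) ∧
    f '' Icc 0 (Real.arctan (1 / Real.sinh L)) = Icc 0 (π / 2) ∧
    f '' Icc (Real.arctan (1 / Real.sinh L)) (2 * Real.arctan (1 / Real.sinh L)) =
      Icc (π / 2) π := by
  simp only [arccos_neg_sin_mul_sinh_add_cos hL] at hf
  subst hf
  have hsin := sin_arctan_inv_sinh hL
  have hhalf : arctan (1 / sinh L) / 2 = arctan (exp (-L)) := by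
    rw [← two_mul_arctan_exp_neg hL, mul_div_cancel_left₀ _ two_ne_zero]
  set t := arctan (1 / sinh L)
  have ht0 : 0 < t := arctan_pos.2 (one_div_pos.2 (sinh_pos_iff.2 hL))
  have htπ : t < π / 2 := arctan_lt_pi_div_two _
  have hjoin : 2 * arctan (exp L * tan (t / 2)) = π / 2 := by
    rw [hhalf, tan_arctan, ← exp_add, add_neg_cancel, exp_zero, arctan_one]
    ring
  have hend : π / 2 + arcsin (cosh L * sin (2 * t - t)) = π := by
    rw [two_mul, add_sub_cancel_right, hsin, mul_one_div_cancel (cosh_pos L).ne', arcsin_one]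
    ring
  have glued := continuousOn_strictMonoOn_image_Icc_ite_le (a := 0) (c := 2 * t)
    (g₁ := fun a => 2 * arctan (exp L * tan (a / 2)))
    (g₂ := fun a => π / 2 + arcsin (cosh L * sin (a - t))) ht0.le (by linarith) ?_ ?_ ?_ ?_ ?_
  · simpa [hjoin, hend] using glued
  · simpa using hjoin
  · exact (continuousOn_two_mul_arctan_mul_tan_half _).mono
      (Icc_subset_Ioo (by linarith [pi_pos]) (by linarith))
  · exact Continuous.continuousOn (by fun_prop)
  · exact (strictMonoOn_two_mul_arctan_mul_tan_half (exp_pos L)).mono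
      (Icc_subset_Ioo (by linarith [pi_pos]) (by linarith))
  · refine ((strictMonoOn_arcsin_mul_sin_sub (cosh_pos L) htπ.le ?_).const_add _).mono
      (Icc_subset_Icc (by linarith) (by linarith))
    rw [hsin, mul_one_div_cancel (cosh_pos L).ne']
end

section
/- For L > 0 define C_L(r) = 2·arctan(e^L·sinh(r)) for 0 ≤ sinh(r) ≤ e^{−L} and C_L(r) = arccos(1 − 2·tanh²(r)·(1 + sinh(L)/sinh(r))) for e^{−L} ≤ sinh(r) ≤ 1/sinh(L). Then C_L is continuous and monotonically increasing on [0, arcsinh(1/sinh L)], with C_L(0) = 0 (interpreting the second branch limit) and C_L(arcsinh(1/sinh L)) = π. -/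
/-!
Writing `s = sinh r` and `m = sinh L`, one has `tanh² r · (1 + m / s) = (s² + m s) / (1 + s²)`,
so `C_L = Φ ∘ sinh` for a piecewise function `Φ` of `s`. The rational function
`(s² + m s) / (1 + s²)` is increasing on `[0, 1/m]`, takes the value `1/2` at `s = e^{-L}`
(where both branches of `Φ` equal `π/2`) and the value `1` at `s = 1/m`. So `Φ` is continuous
and increasing on `[0, 1/m]`, and this transfers to `C_L` along the increasing map `sinh`.
-/

open Real Set

lemma tanh_sq_mul_one_add_div_sinh (m r : ℝ) :
    tanh r ^ 2 * (1 + m / sinh r) = (sinh r ^ 2 + m * sinh r) / (1 + sinh r ^ 2) := by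
  rcases eq_or_ne (sinh r) 0 with h | h
  · simp [tanh_eq_sinh_div_cosh, h]
  · rw [tanh_eq_sinh_div_cosh, div_pow, cosh_sq]
    field_simp
    ring

lemma monotoneOn_sq_add_mul_div_one_add_sq {m : ℝ} (hm : 0 < m) :
    MonotoneOn (fun s => (s ^ 2 + m * s) / (1 + s ^ 2)) (Icc 0 (1 / m)) := by
  rintro s ⟨hs, -⟩ t ⟨-, ht⟩ hst
  have htm : m * t ≤ 1 := by rwa [le_div_iff₀ hm, mul_comm] at ht
  have hfactor : 0 ≤ s + t + m * (1 - s * t) := by nlinarith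
  rw [div_le_div_iff₀ (by positivity) (by positivity)]
  -- the difference of the two sides is `(t - s) (s + t + m (1 - s t))`
  nlinarith [mul_nonneg (sub_nonneg.2 hst) hfactor]

lemma sinh_mul_exp_neg_lt_one (L : ℝ) : sinh L * exp (-L) < 1 := by
  have : exp L * exp (-L) = 1 := by rw [← exp_add, add_neg_cancel, exp_zero]
  rw [sinh_eq]
  nlinarith [exp_pos (-L)]

lemma exp_neg_sq_add_sinh_mul_div (L : ℝ) :
    (exp (-L) ^ 2 + sinh L * exp (-L)) / (1 + exp (-L) ^ 2) = 1 / 2 := by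
  have : exp L * exp (-L) = 1 := by rw [← exp_add, add_neg_cancel, exp_zero]
  rw [sinh_eq, div_eq_iff (by positivity)]
  linear_combination (1 / 2 : ℝ) * this

lemma exp_neg_le_one_div_sinh {L : ℝ} (hL : 0 < L) : exp (-L) ≤ 1 / sinh L := by
  rw [le_div_iff₀ (sinh_pos_iff.2 hL), mul_comm]
  exact (sinh_mul_exp_neg_lt_one L).le

/-- `C_L` as a function of `s = sinh r`. -/
noncomputable def angleOfSinh (L s : ℝ) : ℝ :=
  if s ≤ exp (-L) then 2 * arctan (exp L * s)
  else arccos (1 - 2 * ((s ^ 2 + sinh L * s) / (1 + s ^ 2)))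

lemma two_mul_arctan_exp_mul_exp_neg (L : ℝ) :
    2 * arctan (exp L * exp (-L)) =
      arccos (1 - 2 * ((exp (-L) ^ 2 + sinh L * exp (-L)) / (1 + exp (-L) ^ 2))) := by
  rw [exp_neg_sq_add_sinh_mul_div, ← exp_add, add_neg_cancel, exp_zero, arctan_one]
  norm_num [arccos_zero]
  ring

lemma angleOfSinh_of_exp_neg_le {L s : ℝ} (hs : exp (-L) ≤ s) :
    angleOfSinh L s = arccos (1 - 2 * ((s ^ 2 + sinh L * s) / (1 + s ^ 2))) := by
  rcases hs.eq_or_lt with rfl | hlt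
  · simp only [angleOfSinh, le_refl, if_true, two_mul_arctan_exp_mul_exp_neg]
  · simp only [angleOfSinh, not_le.2 hlt, if_false]

lemma continuous_angleOfSinh (L : ℝ) : Continuous (angleOfSinh L) := by
  refine Continuous.if_le (by fun_prop) ?_ continuous_id continuous_const ?_
  · refine continuous_arccos.comp (continuous_const.sub (continuous_const.mul ?_))
    exact Continuous.div (by fun_prop) (by fun_prop) fun s => by positivity
  · rintro s rfl
    exact two_mul_arctan_exp_mul_exp_neg L

lemma monotoneOn_angleOfSinh {L : ℝ} (hL : 0 < L) :
    MonotoneOn (angleOfSinh L) (Icc 0 (1 / sinh L)) := by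
  have hm : 0 < sinh L := sinh_pos_iff.2 hL
  have he := exp_neg_le_one_div_sinh hL
  have hfirst : MonotoneOn (angleOfSinh L) (Icc 0 (exp (-L))) := by
    refine MonotoneOn.congr (f₁ := fun s => 2 * arctan (exp L * s)) ?_
      fun s hs => (if_pos hs.2).symm
    exact fun s _ t _ hst => by dsimp only; gcongr
  have hsecond : MonotoneOn (angleOfSinh L) (Icc (exp (-L)) (1 / sinh L)) := by
    refine MonotoneOn.congr ?_ fun s hs => (angleOfSinh_of_exp_neg_le hs.1).symm
    intro s hs t ht hst
    have hq := monotoneOn_sq_add_mul_div_one_add_sq hm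
      ⟨(exp_pos _).le.trans hs.1, hs.2⟩ ⟨(exp_pos _).le.trans ht.1, ht.2⟩ hst
    exact antitone_arccos (by simp only at hq; linarith)
  rw [← Icc_union_Icc_eq_Icc (exp_pos _).le he]
  exact hfirst.union_right hsecond (isGreatest_Icc (exp_pos _).le) (isLeast_Icc he)

lemma angleOfSinh_one_div_sinh {L : ℝ} (hL : 0 < L) : angleOfSinh L (1 / sinh L) = π := by
  have hm : sinh L ≠ 0 := (sinh_pos_iff.2 hL).ne'
  have hq : ((1 / sinh L) ^ 2 + sinh L * (1 / sinh L)) / (1 + (1 / sinh L) ^ 2) = 1 := by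
    field_simp
    ring
  rw [angleOfSinh_of_exp_neg_le (exp_neg_le_one_div_sinh hL), hq]
  norm_num

theorem C_L_continuous_monotone (L : ℝ) (hL : 0 < L)
    (C : ℝ → ℝ)
    (hC : C = fun r =>
      if Real.sinh r ≤ Real.exp (-L) then
        2 * Real.arctan (Real.exp L * Real.sinh r)
      else
        Real.arccos (1 - 2 * Real.tanh r ^ 2 * (1 + Real.sinh L / Real.sinh r))) :
    ContinuousOn C (Icc 0 (Real.arsinh (1 / Real.sinh L))) ∧
    MonotoneOn C (Icc 0 (Real.arsinh (1 / Real.sinh L))) ∧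
    C 0 = 0 ∧
    C (Real.arsinh (1 / Real.sinh L)) = π := by
  have hC' : C = angleOfSinh L ∘ sinh := by
    subst hC
    funext r
    simp only [Function.comp, angleOfSinh, mul_assoc, tanh_sq_mul_one_add_div_sinh]
  have hmaps : MapsTo sinh (Icc 0 (arsinh (1 / sinh L))) (Icc 0 (1 / sinh L)) := by
    rintro r ⟨h0, h1⟩
    exact ⟨sinh_zero ▸ sinh_le_sinh.2 h0, sinh_arsinh (1 / sinh L) ▸ sinh_le_sinh.2 h1⟩
  subst hC'
  refine ⟨((continuous_angleOfSinh L).comp continuous_sinh).continuousOn,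
    (monotoneOn_angleOfSinh hL).comp (sinh_strictMono.monotone.monotoneOn _) hmaps, ?_, ?_⟩
  · simp [angleOfSinh, (exp_pos _).le]
  · simp only [Function.comp, sinh_arsinh, angleOfSinh_one_div_sinh hL]
end
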